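/- Let v be a signed capacity on X and σ a permutation of X. For every x ∈ ℝⁿ_σ, letting p ∈ {0,…,n} be determined by x_{σ(p)} < 0 ≤ x_{σ(p+1)} (with conventions x_{σ(0)} = −∞ and x_{σ(n+1)} = +∞), the symmetric signed Choquet integral satisfies Č_v(x) = Σ_{i=1}^p x_{σ(i)} (C_v(1_{S↓_σ(i)}) − C_v(1_{S↓_σ(i−1)})) + Σ_{i=p+1}^n x_{σ(i)} (C_v(1_{S↑_σ(i)}) − C_v(1_{S↑_σ(i+1)})). -/

import Mathlib

/-- `S↑_σ(i)` (0-indexed): the set `{σ(i), σ(i+1), …, σ(n-1)}`.  For `i = n` it is empty. -/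
def SUp {n : ℕ} (σ : Equiv.Perm (Fin n)) (i : ℕ) : Finset (Fin n) :=
  (Finset.univ.filter (fun j : Fin n => i ≤ (j : ℕ))).image σ

/-- `S↓_σ(i)`: the set `{σ(0), …, σ(i-1)}`.  For `i = 0` it is empty. -/
def SDown {n : ℕ} (σ : Equiv.Perm (Fin n)) (i : ℕ) : Finset (Fin n) :=
  (Finset.univ.filter (fun j : Fin n => (j : ℕ) < i)).image σ

/-- Two tuples are comonotonic if some permutation sorts both nondecreasingly. -/
def Comonotone {n : ℕ} (x y : Fin n → ℝ) : Prop :=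
  ∃ σ : Equiv.Perm (Fin n), Monotone (x ∘ σ) ∧ Monotone (y ∘ σ)

/-- The tuple `r·1_S`. -/
def indTuple {n : ℕ} (S : Finset (Fin n)) (r : ℝ) : Fin n → ℝ :=
  fun j => if j ∈ S then r else 0

/-- The signed Choquet integral of `x` w.r.t. `v`, computed via a sorting permutation. -/
noncomputable def Cv {n : ℕ} (v : Finset (Fin n) → ℝ) (x : Fin n → ℝ) : ℝ :=
  ∑ i : Fin n,
    x (Tuple.sort x i) *
      (v (SUp (Tuple.sort x) (i : ℕ)) - v (SUp (Tuple.sort x) ((i : ℕ) + 1)))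

/-- `f` is the restriction to `Iⁿ` of a signed Choquet integral. -/
def IsSignedChoquetOn {n : ℕ} (I : Set ℝ) (f : (Fin n → ℝ) → ℝ) : Prop :=
  ∃ v : Finset (Fin n) → ℝ, v ∅ = 0 ∧
    ∀ σ : Equiv.Perm (Fin n), ∀ x : Fin n → ℝ, (∀ i, x i ∈ I) → Monotone (x ∘ σ) →
      f x = ∑ i : Fin n, x (σ i) * (v (SUp σ (i : ℕ)) - v (SUp σ ((i : ℕ) + 1)))

/-- `f` is the restriction to `Iⁿ` of a symmetric signed Choquet integral
`Č_v(x) = C_v(x⁺) - C_v(x⁻)`. -/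
def IsSymSignedChoquetOn {n : ℕ} (I : Set ℝ) (f : (Fin n → ℝ) → ℝ) : Prop :=
  ∃ v : Finset (Fin n) → ℝ, v ∅ = 0 ∧
    ∀ x : Fin n → ℝ, (∀ i, x i ∈ I) →
      f x = Cv v (fun i => max (x i) 0) - Cv v (fun i => max (-x i) 0)

/-- Comonotonic modularity (on tuples with entries in `D`). -/
def ComonModularOn {n : ℕ} (D : Set ℝ) (f : (Fin n → ℝ) → ℝ) : Prop :=
  ∀ x y : Fin n → ℝ, (∀ i, x i ∈ D) → (∀ i, y i ∈ D) → Comonotone x y →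
    f x + f y = f (fun i => min (x i) (y i)) + f (fun i => max (x i) (y i))

/-- Comonotonic additivity (on tuples with entries in `D`). -/
def ComonAdditiveOn {n : ℕ} (D : Set ℝ) (f : (Fin n → ℝ) → ℝ) : Prop :=
  ∀ x y : Fin n → ℝ, (∀ i, x i ∈ D) → (∀ i, y i ∈ D) → Comonotone x y →
    (∀ i, x i + y i ∈ D) → f (fun i => x i + y i) = f x + f y

/-- Comonotonic maxitivity. -/
def ComonMaxitiveOn {n : ℕ} (D : Set ℝ) (f : (Fin n → ℝ) → ℝ) : Prop :=
  ∀ x y : Fin n → ℝ, (∀ i, x i ∈ D) → (∀ i, y i ∈ D) → Comonotone x y →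
    f (fun i => max (x i) (y i)) = max (f x) (f y)

/-- Comonotonic minitivity. -/
def ComonMinitiveOn {n : ℕ} (D : Set ℝ) (f : (Fin n → ℝ) → ℝ) : Prop :=
  ∀ x y : Fin n → ℝ, (∀ i, x i ∈ D) → (∀ i, y i ∈ D) → Comonotone x y →
    f (fun i => min (x i) (y i)) = min (f x) (f y)

/-- Horizontal min-additivity. -/
def HorizMinAdditiveOn {n : ℕ} (D : Set ℝ) (f : (Fin n → ℝ) → ℝ) : Prop :=
  ∀ x : Fin n → ℝ, (∀ i, x i ∈ D) → ∀ c ∈ D, (∀ i, x i - min (x i) c ∈ D) →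
    f x = f (fun i => min (x i) c) + f (fun i => x i - min (x i) c)

/-- Horizontal max-additivity. -/
def HorizMaxAdditiveOn {n : ℕ} (D : Set ℝ) (f : (Fin n → ℝ) → ℝ) : Prop :=
  ∀ x : Fin n → ℝ, (∀ i, x i ∈ D) → ∀ c ∈ D, (∀ i, x i - max (x i) c ∈ D) →
    f x = f (fun i => max (x i) c) + f (fun i => x i - max (x i) c)

/-- Horizontal median-additivity (for `I` centered at `0`). -/
def HorizMedAdditiveOn {n : ℕ} (I : Set ℝ) (f : (Fin n → ℝ) → ℝ) : Prop :=
  ∀ x : Fin n → ℝ, (∀ i, x i ∈ I) → ∀ c ∈ I, 0 ≤ c →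
    f x = f (fun i => max (-c) (min (x i) c)) + f (fun i => x i - min (x i) c)
        + f (fun i => x i - max (x i) (-c))

/-- Invariance under horizontal min-differences (for domains of nonnegative tuples). -/
def InvHMinDiffOn {n : ℕ} (D : Set ℝ) (f : (Fin n → ℝ) → ℝ) : Prop :=
  ∀ x : Fin n → ℝ, (∀ i, x i ∈ D) → ∀ c ∈ D,
    f x - f (fun i => min (x i) c) =
      f (fun i => if x i ≤ c then 0 else x i) -
        f (fun i => min (if x i ≤ c then 0 else x i) c)

/-- Invariance under horizontal max-differences (for domains of nonpositive tuples). -/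
def InvHMaxDiffOn {n : ℕ} (D : Set ℝ) (f : (Fin n → ℝ) → ℝ) : Prop :=
  ∀ x : Fin n → ℝ, (∀ i, x i ∈ D) → ∀ c ∈ D,
    f x - f (fun i => max (x i) c) =
      f (fun i => if c ≤ x i then 0 else x i) -
        f (fun i => max (if c ≤ x i then 0 else x i) c)

/-- `⋀_{i ∈ S} x i`, with the convention that the empty infimum is `b`. -/
noncomputable def infWith {n : ℕ} (b : ℝ) (S : Finset (Fin n)) (x : Fin n → ℝ) : ℝ :=
  if h : S.Nonempty then S.inf' h x else b

/-- An `[a,b]`-valued capacity. -/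
def IsCapacityOn {n : ℕ} (a b : ℝ) (μ : Finset (Fin n) → ℝ) : Prop :=
  μ ∅ = a ∧ μ Finset.univ = b ∧ ∀ S T : Finset (Fin n), S ⊆ T → μ S ≤ μ T

/-- `f` is nondecreasing (in each argument) on tuples with entries in `D`. -/
def NondecreasingOn {n : ℕ} (D : Set ℝ) (f : (Fin n → ℝ) → ℝ) : Prop :=
  ∀ x y : Fin n → ℝ, (∀ i, x i ∈ D) → (∀ i, y i ∈ D) → (∀ i, x i ≤ y i) → f x ≤ f y

/-!
On `ℝⁿ_σ` the positive part `x⁺` is still sorted by `σ` and vanishes on the first `p`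
coordinates, while `x⁻` is sorted by `σ` reversed and vanishes on the last `n - p`; this
reversal is what turns the sets `S↑_σ` of the negative part into the sets `S↓_σ`. Each
`C_v(1_S)` equals `v(S) - v(∅)`, so the differences on the right-hand side are differences of
`v`. The only real work is that `C_v` may be computed with any permutation sorting its argument:
by summation by parts, two such sums differ only through `v(S↑_σ(i+1))` at indices where
`x_{σ(i)} < x_{σ(i+1)}`, and there `S↑_σ(i+1) = {j | x_{σ(i)} < x_j}` does not depend on `σ`.
-/

open Finset

/-- The formula defining `C_v` on `ℝⁿ_σ`, evaluated at an arbitrary `y`. -/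
def choquetSum {n : ℕ} (v : Finset (Fin n) → ℝ) (σ : Equiv.Perm (Fin n)) (y : Fin n → ℝ) : ℝ :=
  ∑ i : Fin n, y (σ i) * (v (SUp σ i) - v (SUp σ (i + 1)))

theorem Fin.sum_mul_sub_succ_by_parts {M : Type*} [CommRing M] {m : ℕ} (a : Fin (m + 1) → M)
    (D : ℕ → M) :
    ∑ i : Fin (m + 1), a i * (D i - D (i + 1)) =
      a 0 * D 0 - a (Fin.last m) * D (m + 1) +
        ∑ i : Fin m, (a i.succ - a i.castSucc) * D (i + 1) := by
  simp only [mul_sub, sub_mul, sum_sub_distrib]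
  rw [Fin.sum_univ_succ (fun i : Fin (m + 1) => a i * D i),
    Fin.sum_univ_castSucc (fun i : Fin (m + 1) => a i * D (i + 1))]
  simp only [Fin.val_succ, Fin.val_castSucc, Fin.val_zero, Fin.val_last]
  ring

theorem Finset.sum_range_ite_le_sub {M : Type*} [AddCommGroup M] (f : ℕ → M) {k n : ℕ}
    (hk : k ≤ n) :
    ∑ i ∈ range n, (if k ≤ i then f i - f (i + 1) else 0) = f k - f n := by
  induction n, hk using Nat.le_induction with
  | base => simp +contextual [sum_eq_zero, not_le.mpr, Finset.mem_range]
  | succ n hkn ih => rw [sum_range_succ, ih, if_pos hkn]; abel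

section SortingPermutation

variable {n : ℕ}

theorem mem_SUp_apply (σ : Equiv.Perm (Fin n)) (k : ℕ) (j : Fin n) :
    σ j ∈ SUp σ k ↔ k ≤ j := by
  simp [SUp]

theorem mem_SDown_apply (σ : Equiv.Perm (Fin n)) (k : ℕ) (j : Fin n) :
    σ j ∈ SDown σ k ↔ (j : ℕ) < k := by
  simp [SDown]

theorem SUp_zero (σ : Equiv.Perm (Fin n)) : SUp σ 0 = univ :=
  eq_univ_of_forall fun a => by simpa using (mem_SUp_apply σ 0 (σ.symm a))

theorem SUp_eq_empty (σ : Equiv.Perm (Fin n)) {k : ℕ} (hk : n ≤ k) : SUp σ k = ∅ :=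
  eq_empty_of_forall_notMem fun a => by
    obtain ⟨j, rfl⟩ := σ.surjective a
    rw [mem_SUp_apply]
    exact not_le.mpr (j.isLt.trans_le hk)

theorem SUp_revPerm_trans (σ : Equiv.Perm (Fin n)) (k : ℕ) :
    SUp (Fin.revPerm.trans σ) k = SDown σ (n - k) := by
  ext a
  obtain ⟨j, rfl⟩ := σ.surjective a
  have hj : σ j = (Fin.revPerm.trans σ) j.rev := by simp
  rw [hj, mem_SUp_apply, ← hj, mem_SDown_apply, Fin.val_rev]
  omega

theorem SUp_eq_filter_lt {y : Fin n → ℝ} {σ : Equiv.Perm (Fin n)} (hσ : Monotone (y ∘ σ))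
    {i j : Fin n} (hij : (j : ℕ) = i + 1) (hlt : y (σ i) < y (σ j)) :
    SUp σ j = univ.filter fun k => y (σ i) < y k := by
  ext a
  obtain ⟨b, rfl⟩ := σ.surjective a
  rw [mem_SUp_apply, mem_filter, and_iff_right (mem_univ _)]
  constructor
  · exact fun hjb => hlt.trans_le (hσ (Fin.le_def.mpr hjb))
  · intro hib
    by_contra! hbj
    exact (hσ (Fin.le_def.mpr (by omega) : b ≤ i)).not_gt hib

theorem choquetSum_eq_of_monotone (v : Finset (Fin n) → ℝ) {y : Fin n → ℝ}
    {σ τ : Equiv.Perm (Fin n)} (hσ : Monotone (y ∘ σ)) (hτ : Monotone (y ∘ τ)) :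
    choquetSum v σ y = choquetSum v τ y := by
  obtain _ | m := n
  · simp [choquetSum]
  have hστ : ∀ i, y (σ i) = y (τ i) := congrFun
    ((Tuple.comp_sort_eq_comp_iff_monotone.mpr hσ).trans
      (Tuple.comp_sort_eq_comp_iff_monotone.mpr hτ).symm)
  set D : ℕ → ℝ := fun k => v (SUp σ k) - v (SUp τ k)
  have hjump : ∀ i : Fin m, (y (σ i.succ) - y (σ i.castSucc)) * D (i + 1) = 0 := by
    intro i
    rcases (hσ (Fin.castSucc_le_succ i)).eq_or_lt with heq | hlt
    · rw [Function.comp_apply, Function.comp_apply] at heq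
      rw [heq, sub_self, zero_mul]
    · have hlt' : y (τ i.castSucc) < y (τ i.succ) := by rwa [← hστ, ← hστ]
      simp only [D, ← Fin.val_succ, SUp_eq_filter_lt hσ rfl hlt, hστ,
        SUp_eq_filter_lt hτ rfl hlt', sub_self, mul_zero]
  rw [← sub_eq_zero]
  calc choquetSum v σ y - choquetSum v τ y
      = ∑ i : Fin (m + 1), y (σ i) * (D i - D (i + 1)) := by
        simp only [choquetSum, D, ← sum_sub_distrib, hστ]
        exact sum_congr rfl fun i _ => by ring
    _ = 0 := by
        rw [Fin.sum_mul_sub_succ_by_parts]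
        simp [hjump, D, SUp_zero, SUp_eq_empty]

theorem Cv_eq_choquetSum (v : Finset (Fin n) → ℝ) {y : Fin n → ℝ} {σ : Equiv.Perm (Fin n)}
    (hσ : Monotone (y ∘ σ)) : Cv v y = choquetSum v σ y :=
  choquetSum_eq_of_monotone v (Tuple.monotone_sort y) hσ

theorem Cv_eq_sum_SDown_of_antitone (v : Finset (Fin n) → ℝ) {y : Fin n → ℝ}
    {σ : Equiv.Perm (Fin n)} (hσ : Antitone (y ∘ σ)) :
    Cv v y = ∑ i : Fin n, y (σ i) * (v (SDown σ (i + 1)) - v (SDown σ i)) := by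
  have hrev : Monotone (y ∘ Fin.revPerm.trans σ) := fun a b hab =>
    hσ (Fin.rev_le_rev.mpr hab)
  rw [Cv_eq_choquetSum v hrev, choquetSum, ← Equiv.sum_comp Fin.revPerm]
  refine sum_congr rfl fun i _ => ?_
  have hi := i.isLt
  simp only [Equiv.trans_apply, Fin.revPerm_apply, SUp_revPerm_trans, Fin.val_rev, Fin.rev_rev]
  congr 4 <;> omega

theorem Cv_indTuple_SUp (v : Finset (Fin n) → ℝ) (σ : Equiv.Perm (Fin n)) {k : ℕ}
    (hk : k ≤ n) : Cv v (indTuple (SUp σ k) 1) = v (SUp σ k) - v ∅ := by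
  have hind : ∀ i, indTuple (SUp σ k) 1 (σ i) = if k ≤ (i : ℕ) then 1 else 0 := fun i => by
    simp only [indTuple, mem_SUp_apply]
  have hmono : Monotone (indTuple (SUp σ k) 1 ∘ σ) := fun a b hab => by
    have hab : (a : ℕ) ≤ b := hab
    simp only [Function.comp_apply, hind]
    split_ifs <;> first | omega | norm_num
  rw [Cv_eq_choquetSum v hmono, choquetSum, ← SUp_eq_empty σ le_rfl,
    ← sum_range_ite_le_sub (fun i => v (SUp σ i)) hk,
    ← Fin.sum_univ_eq_sum_range (fun i => if k ≤ i then v (SUp σ i) - v (SUp σ (i + 1)) else 0)]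
  simp only [hind, ite_mul, one_mul, zero_mul]

theorem Cv_indTuple_SDown (v : Finset (Fin n) → ℝ) (σ : Equiv.Perm (Fin n)) {k : ℕ}
    (hk : k ≤ n) : Cv v (indTuple (SDown σ k) 1) = v (SDown σ k) - v ∅ := by
  have := Cv_indTuple_SUp v (Fin.revPerm.trans σ) (Nat.sub_le n k)
  rwa [SUp_revPerm_trans, Nat.sub_sub_self hk] at this

end SortingPermutation

theorem statement4_general (n : ℕ) (v : Finset (Fin n) → ℝ)
    (σ : Equiv.Perm (Fin n)) (x : Fin n → ℝ) (hx : Monotone (x ∘ σ))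
    (p : ℕ)
    (hneg : ∀ i : Fin n, (i : ℕ) < p → x (σ i) < 0)
    (hpos : ∀ i : Fin n, p ≤ (i : ℕ) → 0 ≤ x (σ i)) :
    Cv v (fun i => max (x i) 0) - Cv v (fun i => max (-x i) 0) =
      (∑ i ∈ Finset.univ.filter (fun i : Fin n => (i : ℕ) < p),
        x (σ i) * (Cv v (indTuple (SDown σ ((i : ℕ) + 1)) 1)
          - Cv v (indTuple (SDown σ (i : ℕ)) 1)))
      + ∑ i ∈ Finset.univ.filter (fun i : Fin n => p ≤ (i : ℕ)),
          x (σ i) * (Cv v (indTuple (SUp σ (i : ℕ)) 1)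
            - Cv v (indTuple (SUp σ ((i : ℕ) + 1)) 1)) := by
  have hplus : Cv v (fun i => max (x i) 0) =
      ∑ i ∈ univ.filter (fun i : Fin n => p ≤ (i : ℕ)),
        x (σ i) * (v (SUp σ i) - v (SUp σ (i + 1))) := by
    rw [Cv_eq_choquetSum v (fun a b hab => max_le_max (hx hab) le_rfl), choquetSum, sum_filter]
    refine sum_congr rfl fun i _ => ?_
    split_ifs with hi
    · rw [max_eq_left (hpos i hi)]
    · rw [max_eq_right (hneg i (not_le.mp hi)).le, zero_mul]
  have hminus : Cv v (fun i => max (-x i) 0) =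
      -∑ i ∈ univ.filter (fun i : Fin n => (i : ℕ) < p),
        x (σ i) * (v (SDown σ (i + 1)) - v (SDown σ i)) := by
    rw [Cv_eq_sum_SDown_of_antitone v (fun a b hab => max_le_max (neg_le_neg (hx hab)) le_rfl),
      sum_filter, ← sum_neg_distrib]
    refine sum_congr rfl fun i _ => ?_
    split_ifs with hi
    · rw [max_eq_left (neg_nonneg.mpr (hneg i hi).le), neg_mul]
    · rw [max_eq_right (neg_nonpos.mpr (hpos i (not_lt.mp hi))), zero_mul, neg_zero]
  rw [hplus, hminus]
  simp (disch := omega) only [Cv_indTuple_SUp, Cv_indTuple_SDown, sub_sub_sub_cancel_right]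
  ring

theorem statement4 (n : ℕ) (hn : 0 < n) (v : Finset (Fin n) → ℝ) (hv : v ∅ = 0)
    (σ : Equiv.Perm (Fin n)) (x : Fin n → ℝ) (hx : Monotone (x ∘ σ))
    (p : ℕ) (hp : p ≤ n)
    (hneg : ∀ i : Fin n, (i : ℕ) < p → x (σ i) < 0)
    (hpos : ∀ i : Fin n, p ≤ (i : ℕ) → 0 ≤ x (σ i)) :
    Cv v (fun i => max (x i) 0) - Cv v (fun i => max (-x i) 0) =
      (∑ i ∈ Finset.univ.filter (fun i : Fin n => (i : ℕ) < p),
        x (σ i) * (Cv v (indTuple (SDown σ ((i : ℕ) + 1)) 1)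
          - Cv v (indTuple (SDown σ (i : ℕ)) 1)))
      + ∑ i ∈ Finset.univ.filter (fun i : Fin n => p ≤ (i : ℕ)),
          x (σ i) * (Cv v (indTuple (SUp σ (i : ℕ)) 1)
            - Cv v (indTuple (SUp σ ((i : ℕ) + 1)) 1)) :=
  statement4_general n v σ x hx p hneg hpos
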